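/- arXiv:1812.02263 — 2 statements merged into one kernel-verified Lean document; each statement's English description precedes it below -/
import Mathlib

section
/- Suppose the smooth functions a,b,r,s,u,v,w of (x,y,z,t) satisfy the seven-component evolutionary system (sys) of the paper (with r² - 2rsa + 2s²b ≠ 0 and p² + 2ap + 2b > 0 for all relevant p). Then the functions f = u + vp + wp² + (r + sp)√(p² + 2ap + 2b) and g = √(p² + 2ap + 2b) satisfy the zero-curvature equation f_t - g_y + {f,g} = 0 identically in p, where {f,g} = f_p g_x - f_x g_p - p(f_p g_z - g_p f_z) + f g_z - g f_z. -/
set_option maxHeartbeats 2000000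


/-- Smoothness of a function of four real variables. -/
def Smooth4 (f : ℝ → ℝ → ℝ → ℝ → ℝ) : Prop :=
  ContDiff ℝ (⊤ : ℕ∞) (fun v : ℝ × ℝ × ℝ × ℝ => f v.1 v.2.1 v.2.2.1 v.2.2.2)

/-- Partial derivatives of a function of (x,y,z,t). -/
noncomputable def Dx4 (f : ℝ → ℝ → ℝ → ℝ → ℝ) (x y z t : ℝ) : ℝ := deriv (fun q => f q y z t) x
noncomputable def Dy4 (f : ℝ → ℝ → ℝ → ℝ → ℝ) (x y z t : ℝ) : ℝ := deriv (fun q => f x q z t) y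
noncomputable def Dz4 (f : ℝ → ℝ → ℝ → ℝ → ℝ) (x y z t : ℝ) : ℝ := deriv (fun q => f x y q t) z
noncomputable def Dt4 (f : ℝ → ℝ → ℝ → ℝ → ℝ) (x y z t : ℝ) : ℝ := deriv (fun q => f x y z q) t

/-- The Lax function f = u + v p + w p² + (r + s p)√(p² + 2ap + 2b). -/
noncomputable def Ffun (a b r s u v w : ℝ → ℝ → ℝ → ℝ → ℝ) (p x y z t : ℝ) : ℝ :=
  u x y z t + v x y z t * p + w x y z t * p  ^  2
    + (r x y z t + s x y z t * p) * Real.sqrt (p  ^  2 + 2 * a x y z t * p + 2 * b x y z t)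

/-- The Lax function g = √(p² + 2ap + 2b). -/
noncomputable def Gfun (a b : ℝ → ℝ → ℝ → ℝ → ℝ) (p x y z t : ℝ) : ℝ :=
  Real.sqrt (p  ^  2 + 2 * a x y z t * p + 2 * b x y z t)

/-- Partial derivatives of a function of (p,x,y,z,t). -/
noncomputable def dP5 (F : ℝ → ℝ → ℝ → ℝ → ℝ → ℝ) (p x y z t : ℝ) : ℝ := deriv (fun q => F q x y z t) p
noncomputable def dX5 (F : ℝ → ℝ → ℝ → ℝ → ℝ → ℝ) (p x y z t : ℝ) : ℝ := deriv (fun q => F p q y z t) x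
noncomputable def dY5 (F : ℝ → ℝ → ℝ → ℝ → ℝ → ℝ) (p x y z t : ℝ) : ℝ := deriv (fun q => F p x q z t) y
noncomputable def dZ5 (F : ℝ → ℝ → ℝ → ℝ → ℝ → ℝ) (p x y z t : ℝ) : ℝ := deriv (fun q => F p x y q t) z
noncomputable def dT5 (F : ℝ → ℝ → ℝ → ℝ → ℝ → ℝ) (p x y z t : ℝ) : ℝ := deriv (fun q => F p x y z q) t

/-- The contact bracket {F,G} in the variables (p,x,z), with y,t as parameters. -/
noncomputable def cbr5 (F G : ℝ → ℝ → ℝ → ℝ → ℝ → ℝ) (p x y z t : ℝ) : ℝ :=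
  dP5 F p x y z t * dX5 G p x y z t - dX5 F p x y z t * dP5 G p x y z t
    - p * (dP5 F p x y z t * dZ5 G p x y z t - dP5 G p x y z t * dZ5 F p x y z t)
    + F p x y z t * dZ5 G p x y z t - G p x y z t * dZ5 F p x y z t


private theorem sliceX {f : ℝ → ℝ → ℝ → ℝ → ℝ} (hf : Smooth4 f) (x y z t : ℝ) :
    HasDerivAt (fun q => f q y z t) (Dx4 f x y z t) x := by
  have h1 : DifferentiableAt ℝ (fun v : ℝ × ℝ × ℝ × ℝ => f v.1 v.2.1 v.2.2.1 v.2.2.2)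
      (x, y, z, t) := (hf.differentiable (by simp)).differentiableAt
  have h2 : DifferentiableAt ℝ (fun q : ℝ => ((q, y, z, t) : ℝ × ℝ × ℝ × ℝ)) x := by fun_prop
  exact (h1.comp x h2).hasDerivAt

private theorem sliceY {f : ℝ → ℝ → ℝ → ℝ → ℝ} (hf : Smooth4 f) (x y z t : ℝ) :
    HasDerivAt (fun q => f x q z t) (Dy4 f x y z t) y := by
  have h1 : DifferentiableAt ℝ (fun v : ℝ × ℝ × ℝ × ℝ => f v.1 v.2.1 v.2.2.1 v.2.2.2)
      (x, y, z, t) := (hf.differentiable (by simp)).differentiableAt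
  have h2 : DifferentiableAt ℝ (fun q : ℝ => ((x, q, z, t) : ℝ × ℝ × ℝ × ℝ)) y := by fun_prop
  exact (h1.comp y h2).hasDerivAt

private theorem sliceZ {f : ℝ → ℝ → ℝ → ℝ → ℝ} (hf : Smooth4 f) (x y z t : ℝ) :
    HasDerivAt (fun q => f x y q t) (Dz4 f x y z t) z := by
  have h1 : DifferentiableAt ℝ (fun v : ℝ × ℝ × ℝ × ℝ => f v.1 v.2.1 v.2.2.1 v.2.2.2)
      (x, y, z, t) := (hf.differentiable (by simp)).differentiableAt
  have h2 : DifferentiableAt ℝ (fun q : ℝ => ((x, y, q, t) : ℝ × ℝ × ℝ × ℝ)) z := by fun_prop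
  exact (h1.comp z h2).hasDerivAt

private theorem sliceT {f : ℝ → ℝ → ℝ → ℝ → ℝ} (hf : Smooth4 f) (x y z t : ℝ) :
    HasDerivAt (fun q => f x y z q) (Dt4 f x y z t) t := by
  have h1 : DifferentiableAt ℝ (fun v : ℝ × ℝ × ℝ × ℝ => f v.1 v.2.1 v.2.2.1 v.2.2.2)
      (x, y, z, t) := (hf.differentiable (by simp)).differentiableAt
  have h2 : DifferentiableAt ℝ (fun q : ℝ => ((x, y, z, q) : ℝ × ℝ × ℝ × ℝ)) t := by fun_prop
  exact (h1.comp t h2).hasDerivAt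

/-- If a,b,r,s,u,v,w solve the seven-component (3+1)-dimensional system (sys),
then f = u + vp + wp² + (r+sp)√(p²+2ap+2b) and g = √(p²+2ap+2b) satisfy the
zero-curvature equation f_t - g_y + {f,g} = 0 identically in p. -/
theorem zero_curvature_of_sys (a b r s u v w : ℝ → ℝ → ℝ → ℝ → ℝ)
    (ha' : Smooth4 a) (hb' : Smooth4 b) (hr' : Smooth4 r) (hs' : Smooth4 s)
    (hu' : Smooth4 u) (hv' : Smooth4 v) (hw' : Smooth4 w)
    (hden : ∀ x y z t : ℝ, (r x y z t) ^ 2 - 2*(r x y z t)*(s x y z t)*(a x y z t) + 2*(s x y z t) ^ 2*(b x y z t) ≠ 0)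
    (hpos : ∀ p x y z t : ℝ, p  ^  2 + 2 * (a x y z t) * p + 2 * (b x y z t) > 0)
    (hA : ∀ x y z t : ℝ, Dt4 a x y z t = (1 / ((r x y z t) ^ 2 - 2*(r x y z t)*(s x y z t)*(a x y z t) + 2*(s x y z t) ^ 2*(b x y z t))) * ((4*(w x y z t)*((r x y z t)*(a x y z t) - (s x y z t)*(b x y z t)) - (v x y z t)*(r x y z t))*(Dx4 a x y z t) + (r x y z t)*(Dy4 a x y z t) + (2*(w x y z t)*(2*(a x y z t)*((r x y z t)*(a x y z t) - (s x y z t)*(b x y z t)) - (r x y z t)*(b x y z t)) - (u x y z t)*(r x y z t))*(Dz4 a x y z t) + ((v x y z t)*(s x y z t) - 2*(w x y z t)*(r x y z t))*(Dx4 b x y z t) - (s x y z t)*(Dy4 b x y z t) + (2*(w x y z t)*((s x y z t)*(b x y z t) - (r x y z t)*(a x y z t)) + (u x y z t)*(s x y z t))*(Dz4 b x y z t) + ((r x y z t) - (s x y z t)*(a x y z t))*(Dx4 u x y z t) + ((r x y z t)*(a x y z t) - 2*(s x y z t)*(b x y z t))*(Dz4 u x y z t) + (2*(s x y z t)*(b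 x y z t) - (r x y z t)*(a x y z t))*(Dx4 v x y z t) + 2*((a x y z t)*((s x y z t)*(b x y z t) - (r x y z t)*(a x y z t)) + (r x y z t)*(b x y z t))*(Dz4 v x y z t) + 2*((a x y z t)*((a x y z t)*(r x y z t) - (s x y z t)*(b x y z t)) - (r x y z t)*(b x y z t))*(Dx4 w x y z t) + 2*(2*(a x y z t) ^ 2*((a x y z t)*(r x y z t) - (s x y z t)*(b x y z t)) - 3*(r x y z t)*(a x y z t)*(b x y z t) + 2*(s x y z t)*(b x y z t) ^ 2)*(Dz4 w x y z t)))
    (hB : ∀ x y z t : ℝ, Dt4 b x y z t = (1 / ((r x y z t) ^ 2 - 2*(r x y z t)*(s x y z t)*(a x y z t) + 2*(s x y z t) ^ 2*(b x y z t))) * (2*(2*(w x y z t)*(r x y z t) - (v x y z t)*(s x y z t))*(b x y z t)*(Dx4 a x y z t) + 2*(s x y z t)*(b x y z t)*(Dy4 a x y z t) + 2*(2*(w x y z t)*((r x y z t)*(a x y z t) - (s x y z t)*(b x y z t)) - (u x y z t)*(s x y z t))*(b x y z t)*(Dz4 a x y z t) + (2*(s x y z t)*((v x y z t)*(a x y z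 t) - 2*(w x y z t)*(b x y z t)) - (v x y z t)*(r x y z t))*(Dx4 b x y z t) + ((r x y z t) - 2*(s x y z t)*(a x y z t))*(Dy4 b x y z t) + (2*((u x y z t)*(s x y z t)*(a x y z t) - (w x y z t)*(r x y z t)*(b x y z t)) - (u x y z t)*(r x y z t))*(Dz4 b x y z t) + (2*(s x y z t)*((b x y z t) - (a x y z t) ^ 2) + (r x y z t)*(a x y z t))*(Dx4 u x y z t) + 2*((r x y z t) - (s x y z t)*(a x y z t))*(b x y z t)*(Dz4 u x y z t) - 2*((r x y z t) - (s x y z t)*(a x y z t))*(b x y z t)*(Dx4 v x y z t) - 2*((r x y z t)*(a x y z t) - 2*(s x y z t)*(b x y z t))*(b x y z t)*(Dz4 v x y z t) + 2*((r x y z t)*(a x y z t) - 2*(s x y z t)*(b x y z t))*(b x y z t)*(Dx4 w x y z t) + 4*((a x y z t)*((r x y z t)*(a x y z t) - (s x y z t)*(b x y z t)) - (r x y z t)*(b x y z t))*(b x y z t)*(Dz4 w x y z t)))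
    (hR : ∀ x y z t : ℝ, Dt4 r x y z t = (1 / ((r x y z t) ^ 2 - 2*(r x y z t)*(s x y z t)*(a x y z t) + 2*(s x y z t) ^ 2*(b x y z t))) * (((v x y z t)*(s x y z t) - 2*(w x y z t)*(r x y z t))*(r x y z t)*(Dx4 a x y z t) - (r x y z t)*(s x y z t)*(Dy4 a x y z t) - (2*(w x y z t)*((r x y z t)*(a x y z t) - (s x y z t)*(b x y z t)) - (u x y z t)*(s x y z t))*(r x y z t)*(Dz4 a x y z t) + (2*(w x y z t)*(r x y z t) - (v x y z t)*(s x y z t))*(s x y z t)*(Dx4 b x y z t) + (s x y z t) ^ 2*(Dy4 b x y z t) + ((w x y z t)*(r x y z t) ^ 2 - (u x y z t)*(s x y z t) ^ 2)*(Dz4 b x y z t) + ((s x y z t)*(a x y z t) - (r x y z t))*(s x y z t)*(Dx4 u x y z t) + (2*(s x y z t)*(b x y z t) - (r x y z t)*(a x y z t))*(s x y z t)*(Dz4 u x y z t) + ((r x y z t) - (s x y z t)*(a x y z t))*(r x y z t)*(Dx4 v x y z t) + ((r x y z t)*(a x y z t) - 2*(s x y z t)*(b x y z t))*(r x y z t)*(Dz4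 v x y z t) + (2*(s x y z t)*(b x y z t) - (r x y z t)*(a x y z t))*(r x y z t)*(Dx4 w x y z t) - 2*((a x y z t)*((r x y z t)*(a x y z t) - (s x y z t)*(b x y z t)) - (r x y z t)*(b x y z t))*(r x y z t)*(Dz4 w x y z t)))
    (hS : ∀ x y z t : ℝ, Dt4 s x y z t = (Dx4 w x y z t) + (a x y z t)*(Dz4 w x y z t) + (w x y z t)*(Dz4 a x y z t))
    (hU : ∀ x y z t : ℝ, Dt4 u x y z t = (a x y z t)*(Dx4 r x y z t) + 2*(b x y z t)*(Dz4 r x y z t) - (s x y z t)*(Dx4 b x y z t))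
    (hV : ∀ x y z t : ℝ, Dt4 v x y z t = (Dx4 r x y z t) + (a x y z t)*(Dz4 r x y z t) + (a x y z t)*(Dx4 s x y z t) + 2*(b x y z t)*(Dz4 s x y z t) - (s x y z t)*(Dx4 a x y z t) + (s x y z t)*(Dz4 b x y z t))
    (hW : ∀ x y z t : ℝ, Dt4 w x y z t = (Dx4 s x y z t) + (a x y z t)*(Dz4 s x y z t) + (s x y z t)*(Dz4 a x y z t)) :
    ∀ p x y z t : ℝ,
      dT5 (Ffun a b r s u v w) p x y z t - dY5 (Gfun a b) p x y z t
        + cbr5 (Ffun a b r s u v w) (Gfun a b) p x y z t = 0 := by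
  
  intro p x y z t
  have hQ : (0:ℝ) < p ^ 2 + 2 * a x y z t * p + 2 * b x y z t := hpos p x y z t
  have hQne : p ^ 2 + 2 * a x y z t * p + 2 * b x y z t ≠ 0 := ne_of_gt hQ
  have hg0 : 0 < Real.sqrt (p ^ 2 + 2 * a x y z t * p + 2 * b x y z t) := Real.sqrt_pos.mpr hQ
  have hgne : Real.sqrt (p ^ 2 + 2 * a x y z t * p + 2 * b x y z t) ≠ 0 := ne_of_gt hg0
  have hg2 : Real.sqrt (p ^ 2 + 2 * a x y z t * p + 2 * b x y z t) ^ 2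
      = p ^ 2 + 2 * a x y z t * p + 2 * b x y z t := Real.sq_sqrt hQ.le
  have hDD := hden x y z t
  -- slice derivatives
  have Hax := sliceX ha' x y z t
  have Hbx := sliceX hb' x y z t
  have Hrx := sliceX hr' x y z t
  have Hsx := sliceX hs' x y z t
  have Hux := sliceX hu' x y z t
  have Hvx := sliceX hv' x y z t
  have Hwx := sliceX hw' x y z t
  have Haz := sliceZ ha' x y z t
  have Hbz := sliceZ hb' x y z t
  have Hrz := sliceZ hr' x y z t
  have Hsz := sliceZ hs' x y z t
  have Huz := sliceZ hu' x y z t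
  have Hvz := sliceZ hv' x y z t
  have Hwz := sliceZ hw' x y z t
  have Hat := sliceT ha' x y z t
  have Hbt := sliceT hb' x y z t
  have Hrt := sliceT hr' x y z t
  have Hst := sliceT hs' x y z t
  have Hut := sliceT hu' x y z t
  have Hvt := sliceT hv' x y z t
  have Hwt := sliceT hw' x y z t
  have Hay := sliceY ha' x y z t
  have Hby := sliceY hb' x y z t
  -- sqrt-argument slices and sqrt slices
  have hQxd := ((hasDerivAt_const x (p ^ 2)).add ((Hax.const_mul 2).mul_const p)).add
    (Hbx.const_mul 2)
  have hQzd := ((hasDerivAt_const z (p ^ 2)).add ((Haz.const_mul 2).mul_const p)).add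
    (Hbz.const_mul 2)
  have hQtd := ((hasDerivAt_const t (p ^ 2)).add ((Hat.const_mul 2).mul_const p)).add
    (Hbt.const_mul 2)
  have hQyd := ((hasDerivAt_const y (p ^ 2)).add ((Hay.const_mul 2).mul_const p)).add
    (Hby.const_mul 2)
  have hQpd := ((hasDerivAt_pow 2 p).add ((hasDerivAt_id p).const_mul (2 * a x y z t))).add
    (hasDerivAt_const p (2 * b x y z t))
  have hsqx := hQxd.sqrt hQne
  have hsqz := hQzd.sqrt hQne
  have hsqt := hQtd.sqrt hQne
  have hsqy := hQyd.sqrt hQne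
  have hsqp := hQpd.sqrt hQne
  -- derivative identifications
  have hdGx : dX5 (Gfun a b) p x y z t = _ := hsqx.deriv
  have hdGz : dZ5 (Gfun a b) p x y z t = _ := hsqz.deriv
  have hdGy : dY5 (Gfun a b) p x y z t = _ := hsqy.deriv
  have hdGp : dP5 (Gfun a b) p x y z t = _ := hsqp.deriv
  have hFxc := ((Hux.add (Hvx.mul_const p)).add (Hwx.mul_const (p ^ 2))).add
    ((Hrx.add (Hsx.mul_const p)).mul hsqx)
  have hFzc := ((Huz.add (Hvz.mul_const p)).add (Hwz.mul_const (p ^ 2))).add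
    ((Hrz.add (Hsz.mul_const p)).mul hsqz)
  have hFtc := ((Hut.add (Hvt.mul_const p)).add (Hwt.mul_const (p ^ 2))).add
    ((Hrt.add (Hst.mul_const p)).mul hsqt)
  have hFpc := (((hasDerivAt_const p (u x y z t)).add
      ((hasDerivAt_id p).const_mul (v x y z t))).add
      ((hasDerivAt_pow 2 p).const_mul (w x y z t))).add
    (((hasDerivAt_const p (r x y z t)).add
      ((hasDerivAt_id p).const_mul (s x y z t))).mul hsqp)
  have hdFx : dX5 (Ffun a b r s u v w) p x y z t = _ := hFxc.deriv
  have hdFz : dZ5 (Ffun a b r s u v w) p x y z t = _ := hFzc.deriv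
  have hdFt : dT5 (Ffun a b r s u v w) p x y z t = _ := hFtc.deriv
  have hdFp : dP5 (Ffun a b r s u v w) p x y z t = _ := hFpc.deriv
  simp only [id_eq, Pi.add_apply, Pi.mul_apply] at hdGx hdGz hdGy hdGp hdFx hdFz hdFt hdFp
  -- cleared system equations
  have hA2 := hA x y z t
  rw [one_div_mul_eq_div, eq_div_iff hDD] at hA2
  have hB2 := hB x y z t
  rw [one_div_mul_eq_div, eq_div_iff hDD] at hB2
  have hR2 := hR x y z t
  rw [one_div_mul_eq_div, eq_div_iff hDD] at hR2
  have hS2 := hS x y z t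
  have hU2 := hU x y z t
  have hV2 := hV x y z t
  have hW2 := hW x y z t
  -- unfold bracket and Lax function values
  simp only [cbr5]
  rw [show Ffun a b r s u v w p x y z t = u x y z t + v x y z t * p + w x y z t * p ^ 2
      + (r x y z t + s x y z t * p) * Real.sqrt (p ^ 2 + 2 * a x y z t * p + 2 * b x y z t)
      from rfl]
  rw [show Gfun a b p x y z t = Real.sqrt (p ^ 2 + 2 * a x y z t * p + 2 * b x y z t) from rfl]
  -- abbreviate
  set g := Real.sqrt (p ^ 2 + 2 * a x y z t * p + 2 * b x y z t) with hgdef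
  set a0 := a x y z t
  set b0 := b x y z t
  set r0 := r x y z t
  set s0 := s x y z t
  set u0 := u x y z t
  set v0 := v x y z t
  set w0 := w x y z t
  set aX := Dx4 a x y z t
  set aY := Dy4 a x y z t
  set aZ := Dz4 a x y z t
  set aT := Dt4 a x y z t
  set bX := Dx4 b x y z t
  set bY := Dy4 b x y z t
  set bZ := Dz4 b x y z t
  set bT := Dt4 b x y z t
  set rX := Dx4 r x y z t
  set rZ := Dz4 r x y z t
  set rT := Dt4 r x y z t
  set sX := Dx4 s x y z t
  set sZ := Dz4 s x y z t
  set sT := Dt4 s x y z t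
  set uX := Dx4 u x y z t
  set uZ := Dz4 u x y z t
  set uT := Dt4 u x y z t
  set vX := Dx4 v x y z t
  set vZ := Dz4 v x y z t
  set vT := Dt4 v x y z t
  set wX := Dx4 w x y z t
  set wZ := Dz4 w x y z t
  set wT := Dt4 w x y z t
  set dFt := dT5 (Ffun a b r s u v w) p x y z t
  set dGy := dY5 (Gfun a b) p x y z t
  set dFp := dP5 (Ffun a b r s u v w) p x y z t
  set dGx := dX5 (Gfun a b) p x y z t
  set dFx := dX5 (Ffun a b r s u v w) p x y z t
  set dGp := dP5 (Gfun a b) p x y z t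
  set dGz := dZ5 (Gfun a b) p x y z t
  set dFz := dZ5 (Ffun a b r s u v w) p x y z t
  -- cleared derivative relations (in abbreviated variables)
  have hGx2 : (g*dGx : ℝ) = (bX + p*aX : ℝ) := by rw [hdGx]; field_simp; ring
  have hGz2 : (g*dGz : ℝ) = (bZ + p*aZ : ℝ) := by rw [hdGz]; field_simp; ring
  have hGy2 : (g*dGy : ℝ) = (bY + p*aY : ℝ) := by rw [hdGy]; field_simp; ring
  have hGp2 : (g*dGp : ℝ) = (a0 + p : ℝ) := by rw [hdGp]; field_simp; ring
  have hFx2 : (g*dFx : ℝ) = (uX*g + rX*g^2 + r0*bX + p*vX*g + p*sX*g^2 + p*s0*bX + p*r0*aX + p^2*wX*g + p^2*s0*aX : ℝ) := by rw [hdFx]; field_simp; ring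
  have hFz2 : (g*dFz : ℝ) = (uZ*g + rZ*g^2 + r0*bZ + p*vZ*g + p*sZ*g^2 + p*s0*bZ + p*r0*aZ + p^2*wZ*g + p^2*s0*aZ : ℝ) := by rw [hdFz]; field_simp; ring
  have hFt2 : (g*dFt : ℝ) = (uT*g + rT*g^2 + r0*bT + p*vT*g + p*sT*g^2 + p*s0*bT + p*r0*aT + p^2*wT*g + p^2*s0*aT : ℝ) := by rw [hdFt]; field_simp; ring
  have hFp2 : (g*dFp : ℝ) = (v0*g + s0*g^2 + a0*r0 + 2*p*w0*g + p*r0 + p*a0*s0 + p^2*s0 : ℝ) := by rw [hdFp]; field_simp; ring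
  have key : (dFt - dGy + (dFp * dGx - dFx * dGp - p * (dFp * dGz - dGp * dFz)
      + (u0 + v0 * p + w0 * p ^ 2 + (r0 + s0 * p) * g) * dGz - g * dFz))
      * (g * g * (r0 ^ 2 - 2 * r0 * s0 * a0 + 2 * s0 ^ 2 * b0)) = 0 := by
    linear_combination ((r0^2*g + 2*b0*s0^2*g + -2*a0*r0*s0*g : ℝ)) * hFt2 +
      ((-1*r0^2*g + -2*b0*s0^2*g + 2*a0*r0*s0*g : ℝ)) * hGy2 +
      ((r0^2*g*dGx + 2*b0*s0^2*g*dGx + -2*a0*r0*s0*g*dGx + -1*p*r0^2*g*dGz + -2*p*b0*s0^2*g*dGz + 2*p*a0*r0*s0*g*dGz : ℝ)) * hFp2 +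
      ((r0^2*v0*g + r0^2*s0*g^2 + 2*b0*s0^2*v0*g + 2*b0*s0^3*g^2 + -2*a0*r0*s0*v0*g + -2*a0*r0*s0^2*g^2 + a0*r0^3 + 2*a0*b0*r0*s0^2 + -2*a0^2*r0^2*s0 + 2*p*r0^2*w0*g + p*r0^3 + 4*p*b0*s0^2*w0*g + 2*p*b0*r0*s0^2 + -4*p*a0*r0*s0*w0*g + -1*p*a0*r0^2*s0 + 2*p*a0*b0*s0^3 + -2*p*a0^2*r0*s0^2 + p^2*r0^2*s0 + 2*p^2*b0*s0^3 + -2*p^2*a0*r0*s0^2 : ℝ)) * hGx2 +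
      ((-1*r0^2*g*dGp + -2*b0*s0^2*g*dGp + 2*a0*r0*s0*g*dGp : ℝ)) * hFx2 +
      ((-1*r0^2*uX*g + -1*r0^2*rX*g^2 + -1*r0^3*bX + -2*b0*s0^2*uX*g + -2*b0*s0^2*rX*g^2 + -2*b0*r0*s0^2*bX + 2*a0*r0*s0*uX*g + 2*a0*r0*s0*rX*g^2 + 2*a0*r0^2*s0*bX + p*r0^2*g*dFz + -1*p*r0^2*vX*g + -1*p*r0^2*sX*g^2 + -1*p*r0^2*s0*bX + -1*p*r0^3*aX + 2*p*b0*s0^2*g*dFz + -2*p*b0*s0^2*vX*g + -2*p*b0*s0^2*sX*g^2 + -2*p*b0*s0^3*bX + -2*p*b0*r0*s0^2*aX + -2*p*a0*r0*s0*g*dFz + 2*p*a0*r0*s0*vX*g + 2*p*a0*r0*s0*sX*g^2 + 2*p*a0*r0*s0^2*bX + 2*p*a0*r0^2*s0*aX + -1*p^2*r0^2*wX*g + -1*p^2*r0^2*s0*aX + -2*p^2*b0*s0^2*wX*g + -2*p^2*b0*s0^3*aX + 2*p^2*a0*r0*s0*wX*g + 2*p^2*a0*r0*s0^2*aX : ℝ))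 * hGp2 +
      ((r0^2*u0*g + r0^3*g^2 + 2*b0*s0^2*u0*g + 2*b0*r0*s0^2*g^2 + -2*a0*r0*s0*u0*g + -2*a0*r0^2*s0*g^2 + -1*p*a0*r0^3 + -2*p*a0*b0*r0*s0^2 + 2*p*a0^2*r0^2*s0 + -1*p^2*r0^2*w0*g + -1*p^2*r0^3 + -2*p^2*b0*s0^2*w0*g + -2*p^2*b0*r0*s0^2 + 2*p^2*a0*r0*s0*w0*g + p^2*a0*r0^2*s0 + -2*p^2*a0*b0*s0^3 + 2*p^2*a0^2*r0*s0^2 + -1*p^3*r0^2*s0 + -2*p^3*b0*s0^3 + 2*p^3*a0*r0*s0^2 : ℝ)) * hGz2 +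
      ((-1*r0^2*g^2 + -2*b0*s0^2*g^2 + 2*a0*r0*s0*g^2 + p*a0*r0^2 + 2*p*a0*b0*s0^2 + -2*p*a0^2*r0*s0 + p^2*r0^2 + 2*p^2*b0*s0^2 + -2*p^2*a0*r0*s0 : ℝ)) * hFz2 +
      ((p*r0*g + p^2*s0*g : ℝ)) * hA2 +
      ((r0*g + p*s0*g : ℝ)) * hB2 +
      ((g^3 : ℝ)) * hR2 +
      ((p*r0^2*g^3 + 2*p*b0*s0^2*g^3 + -2*p*a0*r0*s0*g^3 : ℝ)) * hS2 +
      ((r0^2*g^2 + 2*b0*s0^2*g^2 + -2*a0*r0*s0*g^2 : ℝ)) * hU2 +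
      ((p*r0^2*g^2 + 2*p*b0*s0^2*g^2 + -2*p*a0*r0*s0*g^2 : ℝ)) * hV2 +
      ((p^2*r0^2*g^2 + 2*p^2*b0*s0^2*g^2 + -2*p^2*a0*r0*s0*g^2 : ℝ)) * hW2 +
      ((s0^2*bY*g + -1*s0^2*v0*bX*g + -1*s0^2*u0*bZ*g + -1*r0*s0*uX*g + -1*r0*s0*aY*g + 2*r0*s0*w0*bX*g + r0*s0*v0*aX*g + r0*s0*u0*aZ*g + r0^2*vX*g + -1*r0^2*uZ*g + -1*r0^2*rZ*g^2 + r0^2*w0*bZ*g + -2*r0^2*w0*aX*g + -2*b0*s0^2*rZ*g^2 + 2*b0*r0*s0*wX*g + -2*b0*r0*s0*vZ*g + 2*b0*r0*s0*w0*aZ*g + 2*b0*r0^2*wZ*g + a0*s0^2*uX*g + -1*a0*r0*s0*vX*g + a0*r0*s0*uZ*g + 2*a0*r0*s0*rZ*g^2 + -1*a0*r0^2*wX*g + a0*r0^2*vZ*g + -2*a0*r0^2*w0*aZ*g + 2*a0*b0*r0*s0*wZ*g + -2*a0^2*r0^2*wZ*g + p*r0^2*wX*g + -1*p*r0^2*vZ*g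 + -1*p*r0^2*sZ*g^2 + p*r0^2*w0*aZ*g + 2*p*b0*s0^2*wX*g + -2*p*b0*s0^2*vZ*g + -2*p*b0*s0^2*sZ*g^2 + 2*p*b0*s0^2*w0*aZ*g + -2*p*a0*r0*s0*wX*g + 2*p*a0*r0*s0*vZ*g + 2*p*a0*r0*s0*sZ*g^2 + -2*p*a0*r0*s0*w0*aZ*g + p*a0*r0^2*wZ*g + 2*p*a0*b0*s0^2*wZ*g + -2*p*a0^2*r0*s0*wZ*g + -1*p^2*r0^2*wZ*g + -2*p^2*b0*s0^2*wZ*g + 2*p^2*a0*r0*s0*wZ*g : ℝ)) * hg2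
  rcases mul_eq_zero.mp key with h | h
  · linear_combination h
  · exact absurd h (mul_ne_zero (mul_ne_zero hgne hgne) hDD)
end

section
/- Let g(p,x,z) = √(p² + 2ap + 2b) with a, b smooth functions of (x,z) and p² + 2ap + 2b > 0. Then g satisfies {g, g} = 0 and, for f = u + vp + wp² + (r+sp)g with smooth coefficients, the contact bracket {f, g} is of the form A(p) + B(p)·g + C(p)/g for polynomials A, B, C in p with coefficients depending on the functions a,b,r,s,u,v,w and their x-, z-derivatives; in particular g·{f,g} is a polynomial in p and g of degree at most 1 in g. -/
/-- Partial derivative in the first variable `p`. -/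
noncomputable def pdP (f : ℝ → ℝ → ℝ → ℝ) (p x z : ℝ) : ℝ := deriv (fun q => f q x z) p
/-- Partial derivative in the second variable `x`. -/
noncomputable def pdX (f : ℝ → ℝ → ℝ → ℝ) (p x z : ℝ) : ℝ := deriv (fun q => f p q z) x
/-- Partial derivative in the third variable `z`. -/
noncomputable def pdZ (f : ℝ → ℝ → ℝ → ℝ) (p x z : ℝ) : ℝ := deriv (fun q => f p x q) z

/-- Smoothness of a function of three real variables. -/
def Smooth3 (f : ℝ → ℝ → ℝ → ℝ) : Prop :=
  ContDiff ℝ (⊤ : ℕ∞) (fun v : ℝ × ℝ × ℝ => f v.1 v.2.1 v.2.2)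

/-- The contact bracket {f,g} = f_p g_x - f_x g_p - p(f_p g_z - g_p f_z) + f g_z - g f_z. -/
noncomputable def cbr (f g : ℝ → ℝ → ℝ → ℝ) (p x z : ℝ) : ℝ :=
  pdP f p x z * pdX g p x z - pdX f p x z * pdP g p x z
    - p * (pdP f p x z * pdZ g p x z - pdP g p x z * pdZ f p x z)
    + f p x z * pdZ g p x z - g p x z * pdZ f p x z

/-- The contact vector field X_h acting on φ:
X_h(φ) = h_p φ_x + (p h_z - h_x) φ_p + (h - p h_p) φ_z. -/
noncomputable def Xc (h φ : ℝ → ℝ → ℝ → ℝ) (p x z : ℝ) : ℝ :=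
  pdP h p x z * pdX φ p x z + (p * pdZ h p x z - pdX h p x z) * pdP φ p x z
    + (h p x z - p * pdP h p x z) * pdZ φ p x z

/-- Smoothness of a function of two real variables. -/
def Smooth2 (f : ℝ → ℝ → ℝ) : Prop :=
  ContDiff ℝ (⊤ : ℕ∞) (fun v : ℝ × ℝ => f v.1 v.2)

lemma smooth2_hasDerivAt_fst (a : ℝ → ℝ → ℝ) (ha : Smooth2 a) (x z : ℝ) :
    HasDerivAt (fun q => a q z) (deriv (fun q => a q z) x) x := by
  have h1 : DifferentiableAt ℝ (fun v : ℝ × ℝ => a v.1 v.2) (x, z) :=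
    (ha.differentiable (by simp)).differentiableAt
  have h : DifferentiableAt ℝ (fun q : ℝ => a q z) x :=
    by
      have := h1.comp x ((differentiableAt_fun_id : DifferentiableAt ℝ (fun q : ℝ => q) x).prodMk (differentiableAt_const z))
      exact this
  exact h.hasDerivAt

lemma smooth2_hasDerivAt_snd (a : ℝ → ℝ → ℝ) (ha : Smooth2 a) (x z : ℝ) :
    HasDerivAt (fun q => a x q) (deriv (fun q => a x q) z) z := by
  have h1 : DifferentiableAt ℝ (fun v : ℝ × ℝ => a v.1 v.2) (x, z) :=
    (ha.differentiable (by simp)).differentiableAt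
  have h : DifferentiableAt ℝ (fun q : ℝ => a x q) z :=
    h1.comp z ((differentiableAt_const x).prodMk differentiableAt_id)
  exact h.hasDerivAt

lemma hd_quadP (A B p : ℝ) :
    HasDerivAt (fun q : ℝ => q ^ 2 + 2 * A * q + 2 * B) (2 * p + 2 * A) p := by
  have h0 := ((hasDerivAt_pow 2 p).add ((hasDerivAt_id p).const_mul (2 * A))).add_const (2 * B)
  exact h0.congr_deriv (by push_cast; ring)

lemma hd_poly2 (U V W p : ℝ) :
    HasDerivAt (fun q : ℝ => U + V * q + W * q ^ 2) (V + 2 * W * p) p := by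
  have h0 := (((hasDerivAt_id p).const_mul V).const_add U).add ((hasDerivAt_pow 2 p).const_mul W)
  exact h0.congr_deriv (by push_cast; ring)

lemma hd_lin (R S p : ℝ) : HasDerivAt (fun q : ℝ => R + S * q) S p := by
  have h0 := (((hasDerivAt_id p).const_mul S).const_add R)
  exact h0.congr_deriv (by ring)

open Polynomial in
set_option maxHeartbeats 4000000 in
/-- For g = √(p² + 2ap + 2b) one has {g,g} = 0 and, for
f = u + vp + wp² + (r+sp)g, the bracket {f,g} has the form
A(p) + B(p)·g + C(p)/g with A, B, C polynomials in p; in particular g·{f,g}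
is a polynomial in p and g of degree at most 1 in g. -/
theorem bracket_algebraic_structure (a b r s u v w : ℝ → ℝ → ℝ)
    (ha : Smooth2 a) (hb : Smooth2 b) (hr : Smooth2 r) (hs : Smooth2 s)
    (hu : Smooth2 u) (hv : Smooth2 v) (hw : Smooth2 w)
    (hpos : ∀ p x z : ℝ, p ^ 2 + 2 * a x z * p + 2 * b x z > 0) :
    (∀ p x z : ℝ,
      cbr (fun p x z => Real.sqrt (p ^ 2 + 2 * a x z * p + 2 * b x z))
          (fun p x z => Real.sqrt (p ^ 2 + 2 * a x z * p + 2 * b x z)) p x z = 0)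
    ∧ ∀ x z : ℝ, ∃ A B C : Polynomial ℝ,
        (∀ p : ℝ,
          cbr (fun p x z => u x z + v x z * p + w x z * p ^ 2
                + (r x z + s x z * p) * Real.sqrt (p ^ 2 + 2 * a x z * p + 2 * b x z))
              (fun p x z => Real.sqrt (p ^ 2 + 2 * a x z * p + 2 * b x z)) p x z
            = A.eval p + B.eval p * Real.sqrt (p ^ 2 + 2 * a x z * p + 2 * b x z)
              + C.eval p / Real.sqrt (p ^ 2 + 2 * a x z * p + 2 * b x z))
        ∧ ∃ P Q : Polynomial ℝ, ∀ p : ℝ,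
            Real.sqrt (p ^ 2 + 2 * a x z * p + 2 * b x z) *
              cbr (fun p x z => u x z + v x z * p + w x z * p ^ 2
                    + (r x z + s x z * p) * Real.sqrt (p ^ 2 + 2 * a x z * p + 2 * b x z))
                  (fun p x z => Real.sqrt (p ^ 2 + 2 * a x z * p + 2 * b x z)) p x z
              = P.eval p + Q.eval p * Real.sqrt (p ^ 2 + 2 * a x z * p + 2 * b x z) := by
  constructor
  · intro p x z
    simp only [cbr]
    ring
  · intro x z
    have hax := smooth2_hasDerivAt_fst a ha x z
    have hbx := smooth2_hasDerivAt_fst b hb x z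
    have hrx := smooth2_hasDerivAt_fst r hr x z
    have hsx := smooth2_hasDerivAt_fst s hs x z
    have hux := smooth2_hasDerivAt_fst u hu x z
    have hvx := smooth2_hasDerivAt_fst v hv x z
    have hwx := smooth2_hasDerivAt_fst w hw x z
    have haz := smooth2_hasDerivAt_snd a ha x z
    have hbz := smooth2_hasDerivAt_snd b hb x z
    have hrz := smooth2_hasDerivAt_snd r hr x z
    have hsz := smooth2_hasDerivAt_snd s hs x z
    have huz := smooth2_hasDerivAt_snd u hu x z
    have hvz := smooth2_hasDerivAt_snd v hv x z
    have hwz := smooth2_hasDerivAt_snd w hw x z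
    set aX := deriv (fun q => a q z) x with haXd
    set bX := deriv (fun q => b q z) x with hbXd
    set rX := deriv (fun q => r q z) x with hrXd
    set sX := deriv (fun q => s q z) x with hsXd
    set uX := deriv (fun q => u q z) x with huXd
    set vX := deriv (fun q => v q z) x with hvXd
    set wX := deriv (fun q => w q z) x with hwXd
    set aZ := deriv (fun q => a x q) z with haZd
    set bZ := deriv (fun q => b x q) z with hbZd
    set rZ := deriv (fun q => r x q) z with hrZd
    set sZ := deriv (fun q => s x q) z with hsZd
    set uZ := deriv (fun q => u x q) z with huZd
    set vZ := deriv (fun q => v x q) z with hvZd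
    set wZ := deriv (fun q => w x q) z with hwZd
    -- the polynomials
    set QP : Polynomial ℝ := X ^ 2 + C (2 * a x z) * X + C (2 * b x z) with hQP
    set AP : Polynomial ℝ :=
      C (s x z) * (C aX * X + C bX) - (C rX + C sX * X) * (X + C (a x z))
        - X * (C (s x z) * (C aZ * X + C bZ) - (C rZ + C sZ * X) * (X + C (a x z)))
        - (C rZ + C sZ * X) * QP with hAP
    set BP : Polynomial ℝ := -(C uZ + C vZ * X + C wZ * X ^ 2) with hBP
    set CP : Polynomial ℝ :=
      (C (v x z) + C (2 * w x z) * X) * (C aX * X + C bX)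
        - (C uX + C vX * X + C wX * X ^ 2) * (X + C (a x z))
        - X * ((C (v x z) + C (2 * w x z) * X) * (C aZ * X + C bZ)
            - (C uZ + C vZ * X + C wZ * X ^ 2) * (X + C (a x z)))
        + (C (u x z) + C (v x z) * X + C (w x z) * X ^ 2) * (C aZ * X + C bZ) with hCP
    have key : ∀ p : ℝ,
        cbr (fun p x z => u x z + v x z * p + w x z * p ^ 2
              + (r x z + s x z * p) * Real.sqrt (p ^ 2 + 2 * a x z * p + 2 * b x z))
            (fun p x z => Real.sqrt (p ^ 2 + 2 * a x z * p + 2 * b x z)) p x z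
          = AP.eval p + BP.eval p * Real.sqrt (p ^ 2 + 2 * a x z * p + 2 * b x z)
            + CP.eval p / Real.sqrt (p ^ 2 + 2 * a x z * p + 2 * b x z) := by
      intro p
      have hQ := hpos p x z
      have hQx : HasDerivAt (fun q => p ^ 2 + 2 * a q z * p + 2 * b q z)
          (2 * aX * p + 2 * bX) x := by
        have h0 := (((hax.const_mul 2).mul_const p).const_add (p ^ 2)).add (hbx.const_mul 2)
        exact h0
      have hQz : HasDerivAt (fun q => p ^ 2 + 2 * a x q * p + 2 * b x q)
          (2 * aZ * p + 2 * bZ) z := by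
        have h0 := (((haz.const_mul 2).mul_const p).const_add (p ^ 2)).add (hbz.const_mul 2)
        exact h0
      have hGx : HasDerivAt (fun q => Real.sqrt (p ^ 2 + 2 * a q z * p + 2 * b q z))
          ((2 * aX * p + 2 * bX) / (2 * Real.sqrt (p ^ 2 + 2 * a x z * p + 2 * b x z))) x :=
        hQx.sqrt (ne_of_gt hQ)
      have hGz : HasDerivAt (fun q => Real.sqrt (p ^ 2 + 2 * a x q * p + 2 * b x q))
          ((2 * aZ * p + 2 * bZ) / (2 * Real.sqrt (p ^ 2 + 2 * a x z * p + 2 * b x z))) z :=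
        hQz.sqrt (ne_of_gt hQ)
      have hGp : HasDerivAt (fun q : ℝ => Real.sqrt (q ^ 2 + 2 * a x z * q + 2 * b x z))
          ((2 * p + 2 * a x z) / (2 * Real.sqrt (p ^ 2 + 2 * a x z * p + 2 * b x z))) p :=
        (hd_quadP (a x z) (b x z) p).sqrt (ne_of_gt hQ)
      have e1 : pdP (fun p x z => Real.sqrt (p ^ 2 + 2 * a x z * p + 2 * b x z)) p x z
          = (2 * p + 2 * a x z) / (2 * Real.sqrt (p ^ 2 + 2 * a x z * p + 2 * b x z)) :=
        hGp.deriv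
      have e2 : pdX (fun p x z => Real.sqrt (p ^ 2 + 2 * a x z * p + 2 * b x z)) p x z
          = (2 * aX * p + 2 * bX) / (2 * Real.sqrt (p ^ 2 + 2 * a x z * p + 2 * b x z)) :=
        hGx.deriv
      have e3 : pdZ (fun p x z => Real.sqrt (p ^ 2 + 2 * a x z * p + 2 * b x z)) p x z
          = (2 * aZ * p + 2 * bZ) / (2 * Real.sqrt (p ^ 2 + 2 * a x z * p + 2 * b x z)) :=
        hGz.deriv
      have e4 : pdP (fun p x z => u x z + v x z * p + w x z * p ^ 2
            + (r x z + s x z * p) * Real.sqrt (p ^ 2 + 2 * a x z * p + 2 * b x z)) p x z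
          = (v x z + 2 * w x z * p)
            + (s x z * Real.sqrt (p ^ 2 + 2 * a x z * p + 2 * b x z)
              + (r x z + s x z * p) *
                ((2 * p + 2 * a x z) / (2 * Real.sqrt (p ^ 2 + 2 * a x z * p + 2 * b x z)))) := by
        have h0 := (hd_poly2 (u x z) (v x z) (w x z) p).add
          ((hd_lin (r x z) (s x z) p).mul hGp)
        exact h0.deriv
      have e5 : pdX (fun p x z => u x z + v x z * p + w x z * p ^ 2
            + (r x z + s x z * p) * Real.sqrt (p ^ 2 + 2 * a x z * p + 2 * b x z)) p x z
          = (uX + vX * p + wX * p ^ 2)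
            + ((rX + sX * p) * Real.sqrt (p ^ 2 + 2 * a x z * p + 2 * b x z)
              + (r x z + s x z * p) *
                ((2 * aX * p + 2 * bX) / (2 * Real.sqrt (p ^ 2 + 2 * a x z * p + 2 * b x z)))) := by
        have h0 := (((hux.add (hvx.mul_const p)).add (hwx.mul_const (p ^ 2))).add
          ((hrx.add (hsx.mul_const p)).mul hGx))
        exact h0.deriv
      have e6 : pdZ (fun p x z => u x z + v x z * p + w x z * p ^ 2
            + (r x z + s x z * p) * Real.sqrt (p ^ 2 + 2 * a x z * p + 2 * b x z)) p x z
          = (uZ + vZ * p + wZ * p ^ 2)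
            + ((rZ + sZ * p) * Real.sqrt (p ^ 2 + 2 * a x z * p + 2 * b x z)
              + (r x z + s x z * p) *
                ((2 * aZ * p + 2 * bZ) / (2 * Real.sqrt (p ^ 2 + 2 * a x z * p + 2 * b x z)))) := by
        have h0 := (((huz.add (hvz.mul_const p)).add (hwz.mul_const (p ^ 2))).add
          ((hrz.add (hsz.mul_const p)).mul hGz))
        exact h0.deriv
      simp only [cbr]
      rw [e1, e2, e3, e4, e5, e6]
      simp only [hAP, hBP, hCP, hQP, Polynomial.eval_add, Polynomial.eval_sub,
        Polynomial.eval_mul, Polynomial.eval_neg, Polynomial.eval_C, Polynomial.eval_X,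
        Polynomial.eval_pow]
      set g1 := Real.sqrt (p ^ 2 + 2 * a x z * p + 2 * b x z) with hg1
      have hsq : g1 ^ 2 = p ^ 2 + 2 * a x z * p + 2 * b x z := Real.sq_sqrt hQ.le
      have hgne : g1 ≠ 0 := by
        rw [hg1]; exact (Real.sqrt_pos.mpr hQ).ne'
      rw [← hsq]
      field_simp
      ring
    refine ⟨AP, BP, CP, key, BP * QP + CP, AP, fun p => ?_⟩
    rw [key p]
    have hQ := hpos p x z
    simp only [hAP, hBP, hCP, hQP, Polynomial.eval_add, Polynomial.eval_sub,
      Polynomial.eval_mul, Polynomial.eval_neg, Polynomial.eval_C, Polynomial.eval_X,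
      Polynomial.eval_pow]
    set g1 := Real.sqrt (p ^ 2 + 2 * a x z * p + 2 * b x z) with hg1
    have hsq : g1 ^ 2 = p ^ 2 + 2 * a x z * p + 2 * b x z := Real.sq_sqrt hQ.le
    have hgne : g1 ≠ 0 := by
      rw [hg1]; exact (Real.sqrt_pos.mpr hQ).ne'
    rw [← hsq]
    field_simp
    ring
end
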